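/- arXiv:0711.3447 — 2 statements merged into one kernel-verified Lean document; each statement's English description precedes it below -/
import Mathlib

section
/- Let p, m, n : ℝ and a, b, c : ℍ, and let χ : Matrix (Fin 3) (Fin 3) ℍ be the hermitian quaternionic matrix with rows (p, star a, c), (a, m, star b), (star c, b, n). Then the trace-polynomial expression for the determinant evaluates as follows: ((χ.trace).re)³ − 3·(χ.trace).re·((χ*χ).trace).re + 2·((χ*χ*χ).trace).re = 6·( p·m·n − p·normSq b − m·normSq c − n·normSq a + 2·(star a * star b * star c).re ). Equivalently, det χ := (1/3)( tr(χ³) − (3/2)·tr(χ²)·tr(χ) + (1/2)(tr χ)³ ) = pmn − (p|b|² + m|c|² + n|a|²) + 2 Re(ā b̄ c̄). -/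
open Quaternion Matrix

set_option maxHeartbeats 4000000 in
/-- Trace expression for the determinant of a hermitian `3 × 3` quaternionic
matrix `χ` with diagonal `p, m, n` and off-diagonal entries `a, b, c`:
`(tr χ)³ − 3 (tr χ) tr(χ²) + 2 tr(χ³) = 6 (pmn − p|b|² − m|c|² − n|a|² + 2 Re(ā b̄ c̄))`. -/
theorem det_trace_formula_hermitian_quaternionic (p m n : ℝ) (a b c : ℍ[ℝ]) :
    let χ : Matrix (Fin 3) (Fin 3) ℍ[ℝ] :=
      !![(p : ℍ[ℝ]), star a, c;
         a, (m : ℍ[ℝ]), star b;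
         star c, b, (n : ℍ[ℝ])]
    ((χ.trace).re) ^ 3 - 3 * (χ.trace).re * ((χ * χ).trace).re +
        2 * ((χ * χ * χ).trace).re =
      6 * (p * m * n - p * Quaternion.normSq b - m * Quaternion.normSq c -
        n * Quaternion.normSq a + 2 * (star a * star b * star c).re) := by
  intro χ
  simp only [χ, Matrix.trace_fin_three, Matrix.mul_fin_three, Matrix.of_apply,
    Matrix.cons_val', Matrix.cons_val_zero, Matrix.cons_val_one, Matrix.head_cons,
    Matrix.head_fin_const, Matrix.empty_val', Matrix.cons_val_fin_one,
    Matrix.cons_val_two, Matrix.tail_cons,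
    Quaternion.normSq_def', Quaternion.re_mul, Quaternion.re_add, Quaternion.imI_mul,
    Quaternion.imJ_mul, Quaternion.imK_mul, Quaternion.imI_add, Quaternion.imJ_add,
    Quaternion.imK_add, Quaternion.re_star, Quaternion.imI_star, Quaternion.imJ_star,
    Quaternion.imK_star, Quaternion.re_coe, Quaternion.imI_coe, Quaternion.imJ_coe,
    Quaternion.imK_coe]
  ring
end

section
/- Let p, m, n : ℝ and a, b, c : ℍ, and let χ : Matrix (Fin 3) (Fin 3) ℍ be the hermitian quaternionic matrix with rows (p, star a, c), (a, m, star b), (star c, b, n). Then χ satisfies its characteristic equation: χ*χ*χ − (p+m+n) • (χ*χ) + σ • χ − δ • 1 = 0, where σ = p·m + m·n + n·p − normSq a − normSq b − normSq c, δ = p·m·n − p·normSq b − m·normSq c − n·normSq a + 2·(star a * star b * star c).re, and 1 is the 3×3 identity matrix. Here p+m+n = tr χ, σ = ½((tr χ)² − tr(χ²)), and δ = det χ. -/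
/-!
Expand `χ³` entrywise. The diagonal entries are real, hence central, and each product `x * star x`
or `star x * x` collapses to the real number `normSq x`. The only genuinely noncommutative terms
that survive are the cyclic products on the diagonal, e.g. `c * b * a` in the top-left corner; each
pairs with its conjugate `star a * star b * star c` into the real number
`2 * (star a * star b * star c).re`, the same for all three diagonal entries because the real part
of a product is invariant under cyclic rotation. What is left is an identity of `R`-linear
combinations, which holds over any commutative ring `R`.
-/

open Quaternion Matrix

namespace Quaternion

variable {R : Type*} [CommRing R]

theorem coe_eq_smul_one (r : R) : (r : ℍ[R]) = r • 1 := by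
  rw [← mul_one (r : ℍ[R]), coe_mul_eq_smul]

theorem re_mul_comm (x y : ℍ[R]) : (x * y).re = (y * x).re := by
  simp only [re_mul]
  ring

theorem re_mul_mul_rotate (x y z : ℍ[R]) : (y * z * x).re = (x * y * z).re := by
  rw [re_mul_comm, mul_assoc]

theorem mul_mul_add_star_mul_star_mul_star (a b c : ℍ[R]) :
    c * (b * a) + star a * (star b * star c) = (2 * (star a * star b * star c).re) • 1 := by
  rw [← star_mul, ← star_mul, ← mul_assoc, self_add_star', coe_eq_smul_one, ← star_mul, ← star_mul,
    re_star, mul_assoc]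

theorem cayleyHamilton_hermitian_fin_three (p m n : R) (a b c : ℍ[R]) :
    let χ : Matrix (Fin 3) (Fin 3) ℍ[R] :=
      !![(p : ℍ[R]), star a, c;
         a, (m : ℍ[R]), star b;
         star c, b, (n : ℍ[R])]
    χ * χ * χ - (p + m + n) • (χ * χ) +
        (p * m + m * n + n * p - normSq a - normSq b - normSq c) • χ -
        (p * m * n - p * normSq b - m * normSq c - n * normSq a +
          2 * (star a * star b * star c).re) • (1 : Matrix (Fin 3) (Fin 3) ℍ[R]) = 0 := by
  intro χ
  have h₀ := eq_sub_of_add_eq (mul_mul_add_star_mul_star_mul_star a b c)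
  have h₁ := eq_sub_of_add_eq (mul_mul_add_star_mul_star_mul_star b c a)
  have h₂ := eq_sub_of_add_eq (mul_mul_add_star_mul_star_mul_star c a b)
  rw [re_mul_mul_rotate] at h₁
  rw [← re_mul_mul_rotate] at h₂
  ext i j : 1
  fin_cases i <;> fin_cases j <;>
    simp only [χ, Matrix.sub_apply, Matrix.add_apply, Matrix.smul_apply, Matrix.zero_apply, mul_apply,
      one_apply, Fin.sum_univ_three, of_apply, cons_val_zero, cons_val_one, cons_val_two, head_cons,
      tail_cons, Fin.zero_eta, Fin.mk_one, Fin.reduceFinMk, Fin.isValue, Fin.reduceEq, ↓reduceIte] <;>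
    simp only [add_mul, mul_assoc, coe_eq_smul_one, smul_mul_assoc, mul_smul_comm, one_mul, mul_one,
      self_mul_star, star_mul_self, h₀, h₁, h₂] <;>
    module

end Quaternion

/-- A hermitian `3 × 3` quaternionic matrix `χ` satisfies its characteristic
equation `χ³ − (tr χ) χ² + σ(χ) χ − (det χ) 1 = 0`, where
`tr χ = p + m + n`, `σ(χ) = pm + mn + np − |a|² − |b|² − |c|²` and
`det χ = pmn − p|b|² − m|c|² − n|a|² + 2 Re(ā b̄ c̄)`. -/
theorem charpoly_hermitian_quaternionic (p m n : ℝ) (a b c : ℍ[ℝ]) :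
    let χ : Matrix (Fin 3) (Fin 3) ℍ[ℝ] :=
      !![(p : ℍ[ℝ]), star a, c;
         a, (m : ℍ[ℝ]), star b;
         star c, b, (n : ℍ[ℝ])]
    χ * χ * χ - (p + m + n) • (χ * χ) +
        (p * m + m * n + n * p - Quaternion.normSq a - Quaternion.normSq b -
          Quaternion.normSq c) • χ -
        (p * m * n - p * Quaternion.normSq b - m * Quaternion.normSq c -
          n * Quaternion.normSq a + 2 * (star a * star b * star c).re) •
          (1 : Matrix (Fin 3) (Fin 3) ℍ[ℝ]) = 0 :=
  Quaternion.cayleyHamilton_hermitian_fin_three p m n a b c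
end
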